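/- For every nonzero P ∈ O[x], v(P(θ)) ≥ H(P), and equality holds if and only if R_λ(P)(γ̄) ≠ 0 in 𝔽_L. -/

import Mathlib

/-!
Common framework: a finite extension `K` of `ℚ_[p]` inside a fixed algebraic closure
`Om p := AlgebraicClosure ℚ_[p]`, its ring of integers `Oring p K` (the integral closure
of `ℤ_[p]` in `K`), the `ℚ`-valued valuation `w` on `Om p` extending the valuation of `K`
normalized by `w(K^×) = ℤ`, a fixed uniformizer `π`, and the whole Newton polygon /
residual polynomial machinery of Montes–Guàrdia–Nart in order one.
-/

open Polynomial

open scoped Classical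

set_option maxHeartbeats 1000000
set_option synthInstance.maxHeartbeats 1000000

noncomputable section

variable (p : ℕ) [Fact p.Prime]

/-- A fixed algebraic closure of `ℚ_[p]`. -/
abbrev Om : Type _ := AlgebraicClosure ℚ_[p]

/-- The ring of integers (integral closure of `ℤ_[p]`) of a subfield `K` of the
algebraic closure of `ℚ_[p]`. -/
def Oring (K : IntermediateField ℚ_[p] (Om p)) : Subring K :=
  letI : Algebra ℤ_[p] K :=
    ((algebraMap ℚ_[p] K).comp (PadicInt.Coe.ringHom)).toAlgebra
  (integralClosure ℤ_[p] K).toSubring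

/-- Extract the integer value of an element of `WithTop ℚ` (junk value `0`). -/
def zOf (q : WithTop ℚ) : ℤ :=
  if h : ∃ n : ℤ, q = ((n : ℚ) : WithTop ℚ) then h.choose else 0

/-- Extract the rational value (junk value `0` at `⊤`). -/
def qOf (q : WithTop ℚ) : ℚ := q.untopD 0

/-- Canonical map `WithTop ℤ → WithTop ℚ`. -/
def zq : WithTop ℤ → WithTop ℚ := WithTop.map fun n : ℤ => (n : ℚ)

/-- A finite extension `K` of `ℚ_[p]` inside the fixed algebraic closure, together with
the `ℚ ∪ {∞}`-valued additive valuation `w` on the algebraic closure which is the unique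
extension of the discrete valuation `v` of `K` normalized by `v(K^×) = ℤ`, and a fixed
uniformizer `π ∈ O`.  (The hypotheses pin `w` down uniquely: it is an additive valuation,
it is `ℤ`-valued and surjective onto `ℤ` on `K^×`, and it is proportional to the `p`-adic
valuation on `ℚ_[p]`.) -/
structure PadicCtx where
  K : IntermediateField ℚ_[p] (Om p)
  fd : FiniteDimensional ℚ_[p] K
  w : Om p → WithTop ℚ
  w_top : ∀ x, w x = ⊤ ↔ x = 0
  w_mul : ∀ x y, w (x * y) = w x + w y
  w_add : ∀ x y, min (w x) (w y) ≤ w (x + y)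
  w_Kint : ∀ x : K, x ≠ 0 → ∃ n : ℤ, w (x : Om p) = ((n : ℚ) : WithTop ℚ)
  w_Ksurj : ∀ n : ℤ, ∃ x : K, w (x : Om p) = ((n : ℚ) : WithTop ℚ)
  ePad : ℚ
  ePad_pos : 0 < ePad
  w_padic : ∀ x : ℚ_[p], x ≠ 0 →
    w (algebraMap ℚ_[p] (Om p) x) = (((x.valuation : ℚ) * ePad : ℚ) : WithTop ℚ)
  πO : Oring p K
  w_π : w ((πO : K) : Om p) = ((1 : ℚ) : WithTop ℚ)

namespace PadicCtx

variable {p} (C : PadicCtx p)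

/-! ### Basic facts about `w` needed to construct rings of integers -/

theorem w_zero : C.w 0 = ⊤ := (C.w_top 0).mpr rfl

theorem w_one : C.w 1 = 0 := by
  have h := C.w_mul 1 1
  rw [mul_one] at h
  have h1 : C.w 1 ≠ ⊤ := fun hh => one_ne_zero ((C.w_top 1).mp hh)
  rcases WithTop.ne_top_iff_exists.mp h1 with ⟨a, ha⟩
  rw [← ha] at h ⊢
  have : a = a + a := by exact_mod_cast h
  have : a = 0 := by linarith
  exact_mod_cast congrArg (fun x : ℚ => ((x : WithTop ℚ))) this

theorem w_negone : C.w (-1) = 0 := by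
  have h := C.w_mul (-1) (-1)
  rw [neg_mul_neg, one_mul, C.w_one] at h
  have h1 : C.w (-1) ≠ ⊤ := by
    intro hh
    have : (-1 : Om p) = 0 := (C.w_top (-1)).mp hh
    simpa using this
  rcases WithTop.ne_top_iff_exists.mp h1 with ⟨a, ha⟩
  rw [← ha] at h ⊢
  have h' : (0 : ℚ) = a + a := by exact_mod_cast h
  have : a = 0 := by linarith
  exact_mod_cast congrArg (fun x : ℚ => ((x : WithTop ℚ))) this

theorem w_neg (x : Om p) : C.w (-x) = C.w x := by
  have h := C.w_mul (-1) x
  rw [neg_one_mul, C.w_negone, zero_add] at h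
  exact h

/-! ### Rings of integers, maximal ideals, residue fields -/

/-- The ring of integers `O_L = {x ∈ L : w x ≥ 0}` of an intermediate field `L`. -/
def OL (L : IntermediateField ℚ_[p] (Om p)) : Subring (Om p) where
  carrier := {x | x ∈ L ∧ 0 ≤ C.w x}
  zero_mem' := ⟨zero_mem L, by rw [C.w_zero]; exact le_top⟩
  one_mem' := ⟨one_mem L, by rw [C.w_one]⟩
  add_mem' := fun {a b} ha hb =>
    ⟨add_mem ha.1 hb.1, le_trans (le_min ha.2 hb.2) (C.w_add a b)⟩
  mul_mem' := fun {a b} ha hb =>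
    ⟨mul_mem ha.1 hb.1, by rw [C.w_mul]; exact add_nonneg ha.2 hb.2⟩
  neg_mem' := fun {a} ha => ⟨neg_mem ha.1, by rw [C.w_neg]; exact ha.2⟩

theorem mem_OL {L : IntermediateField ℚ_[p] (Om p)} {x : Om p} :
    x ∈ C.OL L ↔ x ∈ L ∧ 0 ≤ C.w x := Iff.rfl

/-- The maximal ideal `m_L = {x ∈ O_L : w x > 0}` of the ring of integers of `L`. -/
def mOL (L : IntermediateField ℚ_[p] (Om p)) : Ideal ↥(C.OL L) where
  carrier := {x | 0 < C.w (x : Om p)}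
  zero_mem' := by
    show 0 < C.w ((0 : ↥(C.OL L)) : Om p)
    rw [show ((0 : ↥(C.OL L)) : Om p) = 0 from rfl, C.w_zero]
    exact lt_top_iff_ne_top.mpr (by simp)
  add_mem' := fun {a b} ha hb =>
    lt_of_lt_of_le (lt_min ha hb) (C.w_add _ _)
  smul_mem' := fun r x hx => by
    show 0 < C.w ((r * x : ↥(C.OL L)) : Om p)
    rw [show ((r * x : ↥(C.OL L)) : Om p) = (r : Om p) * (x : Om p) from rfl, C.w_mul]
    calc (0 : WithTop ℚ) < C.w (x : Om p) := hx
      _ ≤ C.w (r : Om p) + C.w (x : Om p) :=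
        le_add_of_nonneg_left ((C.mem_OL.mp r.2).2)

/-- The residue field `𝔽_L = O_L / m_L`. -/
abbrev resF (L : IntermediateField ℚ_[p] (Om p)) : Type _ := ↥(C.OL L) ⧸ C.mOL L

/-- Inclusion of rings of integers along an inclusion of fields. -/
def OLincl {L M : IntermediateField ℚ_[p] (Om p)} (hLM : L ≤ M) :
    ↥(C.OL L) →+* ↥(C.OL M) where
  toFun x := ⟨x, hLM (C.mem_OL.mp x.2).1, (C.mem_OL.mp x.2).2⟩
  map_one' := rfl
  map_mul' _ _ := rfl
  map_zero' := rfl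
  map_add' _ _ := rfl

/-- The induced map of residue fields. -/
def resMap {L M : IntermediateField ℚ_[p] (Om p)} (hLM : L ≤ M) :
    C.resF L →+* C.resF M :=
  Ideal.Quotient.lift (C.mOL L) ((Ideal.Quotient.mk (C.mOL M)).comp (C.OLincl hLM))
    (fun a ha => by
      simp only [RingHom.comp_apply]
      rw [Ideal.Quotient.eq_zero_iff_mem]
      exact ha)

/-- The residual degree `f(M/L) = [𝔽_M : 𝔽_L]`. -/
def resDeg {L M : IntermediateField ℚ_[p] (Om p)} (hLM : L ≤ M) : ℕ :=
  letI : Algebra (C.resF L) (C.resF M) := (C.resMap hLM).toAlgebra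
  Module.finrank (C.resF L) (C.resF M)

/-- The ramification index `e(M/K)` of `M` over the base field `K`: the least `n > 0`
such that `n • w(M^×) ⊆ ℤ` (recall `w(K^×) = ℤ`). -/
def ramE (M : IntermediateField ℚ_[p] (Om p)) : ℕ :=
  sInf {n | 0 < n ∧ ∀ x : Om p, x ∈ M → x ≠ 0 → ∃ k : ℤ, n • C.w x = ((k : ℚ) : WithTop ℚ)}

/-! ### Polynomials over the ring of integers; `φ`-adic developments -/

/-- Value of `w` on an element of the ring of integers of `K`. -/
def vO (x : ↥(Oring p C.K)) : WithTop ℚ := C.w (((x : C.K)) : Om p)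

/-- The Gauss valuation `v` of a polynomial: the minimum of the values of its
coefficients. -/
def vpol (g : Polynomial ↥(Oring p C.K)) : WithTop ℚ :=
  g.support.inf fun n => C.vO (g.coeff n)

/-- The `i`-th coefficient `a_i` of the `φ`-adic development `f = ∑ a_i φ^i`
(`deg a_i < deg φ`). -/
def phiCoeff (φ f : Polynomial ↥(Oring p C.K)) (i : ℕ) : Polynomial ↥(Oring p C.K) :=
  (f /ₘ (φ ^ i)) %ₘ φ

/-- The residue ring `𝔽 = O/(π)` (the residue field of `K`). -/
abbrev Fres : Type _ := ↥(Oring p C.K) ⧸ (Ideal.span {C.πO} : Ideal ↥(Oring p C.K))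

/-- Reduction of polynomials modulo the maximal ideal `𝔪 = (π)` of `O`. -/
def redO (g : Polynomial ↥(Oring p C.K)) : Polynomial C.Fres :=
  g.map (Ideal.Quotient.mk (Ideal.span {C.πO}))

/-- The residue ring `𝔽_φ = O[x]/(π, φ(x))` (a finite field when `φ` is monic with
irreducible reduction). -/
abbrev Fphi (φ : Polynomial ↥(Oring p C.K)) : Type _ :=
  Polynomial ↥(Oring p C.K) ⧸
    (Ideal.span {Polynomial.C C.πO, φ} : Ideal (Polynomial ↥(Oring p C.K)))

/-- `red : O[x] → 𝔽_φ`, extended to polynomials with coefficients in `K` that have a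
(necessarily unique) preimage in `O[x]` (junk value `0` otherwise). -/
def resK (φ : Polynomial ↥(Oring p C.K)) (g : Polynomial ↥C.K) : C.Fphi φ :=
  if h : ∃ g' : Polynomial ↥(Oring p C.K), g'.map (Oring p C.K).subtype = g then
    Ideal.Quotient.mk _ h.choose
  else 0

/-- `g/π^{v(g)} ∈ K[x]`, the normalized polynomial whose reduction gives residual
coefficients. -/
def liftDiv (g : Polynomial ↥(Oring p C.K)) : Polynomial ↥C.K :=
  (g.map (Oring p C.K).subtype) *
    Polynomial.C (((C.πO : C.K)) ^ (-(zOf (C.vpol g))))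

/-! ### Newton polygons: supporting-line data for the slope `λ = -h/e` -/

/-- The quantity `e·v(a_i) + h·i` attached to the point `(i, v(a_i))` of a family of
coefficients `a`. -/
def ptValF (a : ℕ → Polynomial ↥(Oring p C.K)) (h e i : ℕ) : WithTop ℚ :=
  e • C.vpol (a i) + ((h * i : ℕ) : WithTop ℚ)

/-- `min_i (e·v(a_i) + h·i)`: `e` times the ordinate at the origin of the supporting
line of slope `λ = -h/e` of the principal polygon of the points `(i, v(a_i))`. -/
def wvalF (a : ℕ → Polynomial ↥(Oring p C.K)) (n h e : ℕ) : WithTop ℚ :=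
  (Finset.range (n + 1)).inf fun i => C.ptValF a h e i

/-- Initial abscissa of the `λ`-component (`λ = -h/e`). -/
def sInitF (a : ℕ → Polynomial ↥(Oring p C.K)) (n h e : ℕ) : ℕ :=
  sInf {i | C.ptValF a h e i = C.wvalF a n h e}

/-- Final abscissa of the `λ`-component (`λ = -h/e`). -/
def sFinF (a : ℕ → Polynomial ↥(Oring p C.K)) (n h e : ℕ) : ℕ :=
  sSup {i | C.ptValF a h e i = C.wvalF a n h e}

/-- Residual coefficient `c_i` attached to the slope `λ = -h/e`: it is
`red(a_i/π^{v(a_i)})` if `(i, v(a_i))` lies on the supporting line of slope `λ`, and `0`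
otherwise. -/
def resCoeffF (φ : Polynomial ↥(Oring p C.K)) (a : ℕ → Polynomial ↥(Oring p C.K))
    (n h e i : ℕ) : C.Fphi φ :=
  if C.ptValF a h e i = C.wvalF a n h e then C.resK φ (C.liftDiv (a i)) else 0

/-- The residual polynomial `R_λ(y) = ∑_{j=0}^d c_{s+je} y^j` attached to the slope
`λ = -h/e`. -/
def resPolyF (φ : Polynomial ↥(Oring p C.K)) (a : ℕ → Polynomial ↥(Oring p C.K))
    (n h e : ℕ) : Polynomial (C.Fphi φ) :=
  ∑ j ∈ Finset.range ((C.sFinF a n h e - C.sInitF a n h e) / e + 1),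
    Polynomial.C (C.resCoeffF φ a n h e (C.sInitF a n h e + j * e)) * Polynomial.X ^ j

/-- `(i, v(a_i))` lies on (the finite part of) the principal polygon of the points
`(i, v(a_i))`, i.e. on the supporting line of some negative slope. -/
def onF (a : ℕ → Polynomial ↥(Oring p C.K)) (n i : ℕ) : Prop :=
  ∃ h e : ℕ, 0 < h ∧ 0 < e ∧ C.ptValF a h e i = C.wvalF a n h e

/-- Residual coefficient `c_i` of the principal polygon of the points `(i, v(a_i))`. -/
def cCoeffF (φ : Polynomial ↥(Oring p C.K)) (a : ℕ → Polynomial ↥(Oring p C.K))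
    (n i : ℕ) : C.Fphi φ :=
  if C.onF a n i then C.resK φ (C.liftDiv (a i)) else 0

/-! Specializations to the `φ`-adic development of a polynomial `f`. -/

def ptVal (φ f : Polynomial ↥(Oring p C.K)) (h e i : ℕ) : WithTop ℚ :=
  C.ptValF (C.phiCoeff φ f) h e i

def wval (φ f : Polynomial ↥(Oring p C.K)) (h e : ℕ) : WithTop ℚ :=
  C.wvalF (C.phiCoeff φ f) f.natDegree h e

def sInit (φ f : Polynomial ↥(Oring p C.K)) (h e : ℕ) : ℕ :=
  C.sInitF (C.phiCoeff φ f) f.natDegree h e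

def sFin (φ f : Polynomial ↥(Oring p C.K)) (h e : ℕ) : ℕ :=
  C.sFinF (C.phiCoeff φ f) f.natDegree h e

/-- The residual polynomial `R_λ(f) ∈ 𝔽_φ[y]` of `f` attached to `λ = -h/e`. -/
def resPoly (φ f : Polynomial ↥(Oring p C.K)) (h e : ℕ) : Polynomial (C.Fphi φ) :=
  C.resPolyF φ (C.phiCoeff φ f) f.natDegree h e

/-- Residual coefficient `c_i` of `N_φ⁻(f)`. -/
def cCoeff (φ f : Polynomial ↥(Oring p C.K)) (i : ℕ) : C.Fphi φ :=
  C.cCoeffF φ (C.phiCoeff φ f) f.natDegree i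

/-- `ord_φ(f)`: the length of the side of slope `-∞` of `N_φ⁻(f)`. -/
def ordPhi (φ f : Polynomial ↥(Oring p C.K)) : ℕ := sSup {k | φ ^ k ∣ f}

/-- `ω(f) = ord_{φ̄}(f̄)`: for monic `f`, the length of the principal polygon
`N_φ⁻(f)`. -/
def omga (φ f : Polynomial ↥(Oring p C.K)) : ℕ := sSup {k | (C.redO φ) ^ k ∣ C.redO f}

/-! ### Evaluation in the algebraic closure -/

/-- The canonical map `O → Ω`. -/
def toOm : ↥(Oring p C.K) →+* Om p :=
  (algebraMap ↥C.K (Om p)).comp (Oring p C.K).subtype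

/-- Evaluation of a polynomial with coefficients in `O` at a point of the algebraic
closure. -/
def evOm (g : Polynomial ↥(Oring p C.K)) (θ : Om p) : Om p := (g.map C.toOm).eval θ

/-- The image of the uniformizer in `Ω`. -/
def piOm : Om p := C.toOm C.πO

/-- `γ(θ) = φ(θ)^e/π^h`. -/
def gamOm (φ : Polynomial ↥(Oring p C.K)) (h e : ℕ) (θ : Om p) : Om p :=
  (C.evOm φ θ) ^ (e : ℤ) * C.piOm ^ (-(h : ℤ))

/-- The canonical value in `Ω` of (a lift of) the residual coefficient `c_i` of `P`:
`(a_i/π^{v(a_i)})(θ)` when `(i, v(a_i))` lies on the supporting line, `0` otherwise. -/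
def cOm (φ P : Polynomial ↥(Oring p C.K)) (h e i : ℕ) (θ : Om p) : Om p :=
  if C.ptVal φ P h e i = C.wval φ P h e then
    C.evOm (C.phiCoeff φ P i) θ * C.piOm ^ (-(zOf (C.vpol (C.phiCoeff φ P i))))
  else 0

/-- The canonical value in `Ω` of (the canonical lift of) `R_λ(P)(γ̄)`:
`∑_j c_{s+je}(θ) · γ(θ)^j`.  Its residue class in `𝔽_L` is `R_λ(P)(γ̄)`. -/
def Rom (φ P : Polynomial ↥(Oring p C.K)) (h e : ℕ) (θ : Om p) : Om p :=
  ∑ j ∈ Finset.range ((C.sFin φ P h e - C.sInit φ P h e) / e + 1),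
    C.cOm φ P h e (C.sInit φ P h e + j * e) θ * (C.gamOm φ h e θ) ^ j

/-- `P⁰(θ) = ∑_{(i,u_i) ∈ S_λ(P)} a_i(θ) φ(θ)^i`. -/
def P0om (φ P : Polynomial ↥(Oring p C.K)) (h e : ℕ) (θ : Om p) : Om p :=
  ∑ i ∈ Finset.range (P.natDegree + 1),
    if C.ptVal φ P h e i = C.wval φ P h e then
      C.evOm (C.phiCoeff φ P i) θ * (C.evOm φ θ) ^ i
    else 0

/-- The value `P^S(θ) = π^{-u'} φ(θ)^{-s'} P⁰(θ)` of the virtual factor of `P` attached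
to `λ = -h/e` at `θ`. -/
def PSom (φ P : Polynomial ↥(Oring p C.K)) (h e : ℕ) (θ : Om p) : Om p :=
  C.piOm ^ (-(zOf (C.vpol (C.phiCoeff φ P (C.sInit φ P h e))))) *
    (C.evOm φ θ) ^ (-(C.sInit φ P h e : ℤ)) * C.P0om φ P h e θ

/-- `H(P)`: the ordinate at the origin of the line of slope `λ = -h/e` containing
`S_λ(P)`. -/
def Hq (φ P : Polynomial ↥(Oring p C.K)) (h e : ℕ) : ℚ :=
  qOf (C.wval φ P h e) / e

/-! ### Resultants and indices -/

/-- `v(Res(P, Q)) = ∑_{P(α)=0} v(Q(α))` (sum over the roots of `P` in `Ω` with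
multiplicity). -/
def vRes (P Q : Polynomial ↥(Oring p C.K)) : WithTop ℚ :=
  ((P.map C.toOm).roots.map fun α => C.w (C.evOm Q α)).sum

/-- `u_i = v(a_i)`, ordinate of the `i`-th point of the `φ`-Newton polygon. -/
def uQ (φ f : Polynomial ↥(Oring p C.K)) (i : ℕ) : WithTop ℚ :=
  C.vpol (C.phiCoeff φ f i)

/-- The ordinate of the `φ`-Newton polygon (lower convex envelope of the points
`(i, u_i)`) at the integer abscissa `i`: the minimum over all segments joining two points
`(j, u_j)`, `(k, u_k)` with `j ≤ i ≤ k` of their value at `i`. -/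
def NyW (φ f : Polynomial ↥(Oring p C.K)) (i : ℕ) : WithTop ℚ :=
  ((Finset.range (i + 1)) ×ˢ (Finset.Icc i f.natDegree)).inf fun jk =>
    if jk.1 = jk.2 then C.uQ φ f i
    else
      ((C.uQ φ f jk.1).map fun a => (((jk.2 - i : ℕ) : ℚ) / ((jk.2 - jk.1 : ℕ) : ℚ)) * a) +
      ((C.uQ φ f jk.2).map fun a => (((i - jk.1 : ℕ) : ℚ) / ((jk.2 - jk.1 : ℕ) : ℚ)) * a)

/-- Rational value of the ordinate of the `φ`-Newton polygon at abscissa `i`. -/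
def NyQ (φ f : Polynomial ↥(Oring p C.K)) (i : ℕ) : ℚ := qOf (C.NyW φ f i)

/-- `ind(N_φ⁻(f))`: the index of the principal `φ`-polygon of `f`; the side of slope
`-∞` (of length `ord_φ(f)`) contributes its length times the total height of the finite
part, and the finite part contributes the number of lattice points below (or on) the
polygon, strictly above the horizontal line through its last point and strictly beyond
the vertical line through the initial point of the finite part. -/
def indNP (φ f : Polynomial ↥(Oring p C.K)) : ℚ :=
  (C.ordPhi φ f) * (C.NyQ φ f (C.ordPhi φ f) - C.NyQ φ f (C.omga φ f)) +
  ∑ i ∈ Finset.Ioo (C.ordPhi φ f) (C.omga φ f),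
    ((⌊C.NyQ φ f i - C.NyQ φ f (C.omga φ f)⌋ : ℤ) : ℚ)

/-- Length `E` of the `λ`-component of `N_φ⁻(P)` for `λ = -μ`, `μ ∈ ℚ_{>0}`. -/
def Elen (φ P : Polynomial ↥(Oring p C.K)) (μ : ℚ) : ℕ :=
  C.sFin φ P μ.num.toNat μ.den - C.sInit φ P μ.num.toNat μ.den

/-- Height `H` of the `λ`-component of `N_φ⁻(P)` for `λ = -μ`. -/
def Hht (φ P : Polynomial ↥(Oring p C.K)) (μ : ℚ) : ℚ := (C.Elen φ P μ : ℚ) * μ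

/-- Total height of the finite part of `N_φ⁻(P)`. -/
def Htot (φ P : Polynomial ↥(Oring p C.K)) : ℚ :=
  ∑ᶠ μ : ℚ, if 0 < μ then C.Hht φ P μ else 0

/-- `∑_{i,j} min{E_i H'_j, E'_j H_i}` over the sides of `N_φ⁻(P)` and `N_φ⁻(Q)`,
where a side of slope `-∞` (of length `ord_φ`) has infinite height, so that it
contributes its length times the total height of the finite part of the other
polygon. -/
def resP (φ P Q : Polynomial ↥(Oring p C.K)) : ℚ :=
  (C.ordPhi φ P) * C.Htot φ Q + (C.ordPhi φ Q) * C.Htot φ P +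
  ∑ᶠ μ : ℚ, ∑ᶠ μ' : ℚ,
    if 0 < μ ∧ 0 < μ' then
      min ((C.Elen φ P μ : ℚ) * C.Hht φ Q μ') ((C.Elen φ Q μ' : ℚ) * C.Hht φ P μ)
    else 0

/-- `ord_ψ(R_λ(P))`: the multiplicity of the monic irreducible `ψ ∈ 𝔽_φ[y]` in the
residual polynomial of `P` attached to `λ = -h/e`. -/
def omPsi (φ : Polynomial ↥(Oring p C.K)) (ψ : Polynomial (C.Fphi φ))
    (P : Polynomial ↥(Oring p C.K)) (h e : ℕ) : ℕ :=
  sSup {k | ψ ^ k ∣ C.resPoly φ P h e}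

/-- The subring `O[θ]` of `Ω` generated by the ring of integers of `K` and `θ`. -/
def Otheta (θ : Om p) : Subring (Om p) :=
  Subring.closure ((C.OL C.K : Set (Om p)) ∪ {θ})

/-- The quotient `O_L / O[θ]` (as additive groups); its cardinality is
`q^{ind(F)}` for the minimal polynomial `F` of `θ` over `K`. -/
def idxQuot (L : IntermediateField ℚ_[p] (Om p)) (θ : Om p) : Type _ :=
  ↥(C.OL L) ⧸
    (AddSubgroup.comap ((C.OL L).subtype.toAddMonoidHom) (C.Otheta θ).toAddSubgroup)

end PadicCtx

/-!
Evaluate the `φ`-adic development `P = ∑ aᵢ φⁱ` at `θ`. Since `v(φ(θ)) = h/e` and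
`v(aᵢ(θ)) ≥ uᵢ`, the term `aᵢ(θ) φ(θ)ⁱ` has value at least `uᵢ + i·h/e ≥ H(P)`, strictly so
unless `(i, uᵢ)` lies on the line of slope `-h/e` through `S_λ(P)`. As `h` and `e` are coprime,
the points on that line sit at abscissae `s + je` with `u_{s+je} = u_s - hj`, so the sum of their
terms is `π^{u_s} φ(θ)^s · ∑ⱼ c_{s+je}(θ) γ(θ)ʲ`: the first factor has value exactly `H(P)` and
the second, the canonical lift of `R_λ(P)(γ̄)`, has value `≥ 0`. Hence `v(P(θ)) ≥ H(P)`, with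
equality exactly when that lift is a unit.
-/

namespace AddValuation

theorem map_zpow_of_eq_coe {K : Type*} [DivisionRing K] (v : AddValuation K (WithTop ℚ))
    {x : K} {r : ℚ} (hx : v x = r) (k : ℤ) : v (x ^ k) = ((k * r : ℚ) : WithTop ℚ) := by
  have hpow (n : ℕ) : v (x ^ n) = ((n * r : ℚ) : WithTop ℚ) := by
    rw [v.map_pow, hx, ← WithTop.coe_nsmul, nsmul_eq_mul]
  rcases k with n | n
  · simpa using hpow n
  · rw [zpow_negSucc, v.map_inv, hpow, ← WithTop.LinearOrderedAddCommGroup.coe_neg]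
    congr 1
    push_cast
    ring

theorem nonneg_of_eval₂_eq_zero {K R Γ₀ : Type*} [Field K] [CommRing R]
    [LinearOrderedAddCommGroupWithTop Γ₀] (v : AddValuation K Γ₀) (g : R →+* K)
    (hg : ∀ r, 0 ≤ v (g r)) {Q : R[X]} (hQ : Q.Monic) {z : K} (hz : Q.eval₂ g z = 0) :
    0 ≤ v z := by
  let V := AddValuation.toValuation v
  let g' : R →+* V.integer := g.codRestrict V.integer hg
  exact (Valuation.integer.integers V).mem_of_integral
    ⟨Q.map g', hQ.map g', by rwa [eval₂_map]⟩

theorem coe_le_map_add_and_eq_iff {R : Type*} [Ring R] (v : AddValuation R (WithTop ℚ))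
    {x y : R} {H : ℚ} {r : WithTop ℚ} (hr : 0 ≤ r) (hx : v x = H + r)
    (hy : (H : WithTop ℚ) < v y) :
    (H : WithTop ℚ) ≤ v (x + y) ∧ (v (x + y) = H ↔ r = 0) := by
  rcases hr.eq_or_lt with rfl | hr
  · rw [add_zero] at hx
    rw [v.map_add_eq_of_lt_left (hx ▸ hy), hx]
    simp
  · have hHx : (H : WithTop ℚ) < v x := by
      simpa [hx] using WithTop.add_lt_add_left (WithTop.coe_ne_top (a := H)) hr
    have hHxy : (H : WithTop ℚ) < v (x + y) := (lt_min hHx hy).trans_le (v.map_add x y)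
    exact ⟨hHxy.le, iff_of_false hHxy.ne' hr.ne'⟩

end AddValuation

theorem Finset.sum_range_ite_eq_sum_range_ite_add_mul {M : Type*} [AddCommMonoid M]
    {Q : ℕ → Prop} [DecidablePred Q] (g : ℕ → M) {n s e m : ℕ} (he : 0 < e)
    (hm : s + m * e ≤ n) (hQ : ∀ i ≤ n, Q i → ∃ j ≤ m, i = s + j * e) :
    ∑ i ∈ Finset.range (n + 1), (if Q i then g i else 0) =
      ∑ j ∈ Finset.range (m + 1), if Q (s + j * e) then g (s + j * e) else 0 := by
  have hinj : Set.InjOn (fun j => s + j * e) (Finset.range (m + 1)) := fun a _ b _ hab => by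
    simpa [he.ne'] using hab
  rw [← Finset.sum_image (g := fun j => s + j * e) (f := fun i => if Q i then g i else 0) hinj]
  refine (Finset.sum_subset (fun i hi => ?_) fun i hi hni => if_neg fun hQi => hni ?_).symm
  · obtain ⟨j, hj, rfl⟩ := Finset.mem_image.mp hi
    have : j * e ≤ m * e := Nat.mul_le_mul_right e (by simpa [Nat.lt_succ_iff] using hj)
    exact Finset.mem_range.mpr (by omega)
  · obtain ⟨j, hj, rfl⟩ := hQ i (by simpa [Nat.lt_succ_iff] using hi) hQi
    exact Finset.mem_image.mpr ⟨j, Finset.mem_range.mpr (by omega), rfl⟩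

namespace Polynomial

variable {R : Type*} [CommRing R]

theorem divByMonic_divByMonic (f : R[X]) {a b : R[X]} (ha : a.Monic) (hb : b.Monic) :
    f /ₘ a /ₘ b = f /ₘ (a * b) := by
  nontriviality R
  refine ((div_modByMonic_unique _ (a * (f /ₘ a %ₘ b) + f %ₘ a) (ha.mul hb)
    ⟨?_, ?_⟩).1).symm
  · linear_combination (modByMonic_add_div f a) + a * (modByMonic_add_div (f /ₘ a) b)
  · rw [hb.degree_mul]
    refine (degree_add_le _ _).trans_lt (max_lt ?_ ?_)
    · exact (degree_mul_le _ _).trans_lt <| WithBot.add_lt_add_left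
        (degree_ne_bot.mpr ha.ne_zero) (degree_modByMonic_lt _ hb)
    · exact (degree_modByMonic_lt _ ha).trans_le
        (le_add_of_nonneg_right (zero_le_degree_iff.mpr hb.ne_zero))

theorem eq_sum_modByMonic_mul_pow_add {φ : R[X]} (hφ : φ.Monic) (f : R[X]) (N : ℕ) :
    f = ∑ i ∈ Finset.range N, (f /ₘ φ ^ i %ₘ φ) * φ ^ i + f /ₘ φ ^ N * φ ^ N := by
  induction N with
  | zero => simp
  | succ N ih =>
    rw [Finset.sum_range_succ, pow_succ, ← divByMonic_divByMonic _ (hφ.pow N) hφ]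
    linear_combination ih - φ ^ N * modByMonic_add_div (f /ₘ φ ^ N) φ

theorem divByMonic_pow_eq_zero {φ : R[X]} (hφ : φ.Monic) (hdeg : 0 < φ.natDegree) {f : R[X]}
    {N : ℕ} (hN : f.natDegree < N) : f /ₘ φ ^ N = 0 := by
  nontriviality R
  rw [divByMonic_eq_zero_iff (hφ.pow N), degree_eq_natDegree (hφ.pow N).ne_zero,
    hφ.natDegree_pow]
  refine degree_le_natDegree.trans_lt (WithBot.coe_lt_coe.mpr ?_)
  nlinarith

theorem exists_monic_irreducible_dvd_of_eval₂_eq_zero [IsDomain R] {S : Type*} [CommRing S]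
    [IsDomain S] (g : R →+* S) {f : R[X]} (hf : f.Monic) {z : S} (hz : f.eval₂ g z = 0) :
    ∃ F : R[X], F.Monic ∧ Irreducible F ∧ F ∣ f ∧ F.eval₂ g z = 0 := by
  induction hn : f.natDegree using Nat.strong_induction_on generalizing f with
  | _ n ih =>
  by_cases hirr : Irreducible f
  · exact ⟨f, hf, hirr, dvd_rfl, hz⟩
  have hf1 : f ≠ 1 := by rintro rfl; simp at hz
  rw [hf.irreducible_iff_natDegree] at hirr
  push Not at hirr
  obtain ⟨a, b, ha, hb, rfl, hna, hnb⟩ := hirr hf1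
  rw [ha.natDegree_mul hb] at hn
  rcases mul_eq_zero.mp (eval₂_mul g z ▸ hz) with hz | hz
  · obtain ⟨F, hFm, hFi, hFd, hF0⟩ := ih a.natDegree (by omega) ha hz rfl
    exact ⟨F, hFm, hFi, hFd.mul_right b, hF0⟩
  · obtain ⟨F, hFm, hFi, hFd, hF0⟩ := ih b.natDegree (by omega) hb hz rfl
    exact ⟨F, hFm, hFi, hFd.mul_left a, hF0⟩

end Polynomial

theorem Nat.Coprime.dvd_sub_of_mul_add_mul_eq {h e s i : ℕ} {a b : ℤ} (hcop : h.Coprime e)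
    (hsi : s ≤ i) (hab : (e : ℤ) * b + h * i = e * a + h * s) : e ∣ i - s := by
  refine hcop.symm.dvd_of_dvd_mul_left (Int.natCast_dvd_natCast.mp ⟨a - b, ?_⟩)
  push_cast [hsi]
  linarith

theorem zOf_intCast (n : ℤ) : zOf ((n : ℚ) : WithTop ℚ) = n := by
  have hex : ∃ m : ℤ, ((n : ℚ) : WithTop ℚ) = ((m : ℚ) : WithTop ℚ) := ⟨n, rfl⟩
  rw [zOf, dif_pos hex]
  exact_mod_cast hex.choose_spec.symm

namespace PadicCtx

variable {p} (C : PadicCtx p)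

def valuation : AddValuation (Om p) (WithTop ℚ) :=
  AddValuation.of C.w C.w_zero C.w_one C.w_add C.w_mul

theorem valuation_apply (x : Om p) : C.valuation x = C.w x := rfl

theorem ne_zero_of_w_eq_coe {x : Om p} {r : ℚ} (hx : C.w x = r) : x ≠ 0 := fun h0 => by
  rw [h0, C.w_zero] at hx
  exact WithTop.top_ne_coe hx

theorem w_piOm : C.w C.piOm = ((1 : ℚ) : WithTop ℚ) := C.w_π

theorem w_piOm_zpow (k : ℤ) : C.w (C.piOm ^ k) = ((k : ℚ) : WithTop ℚ) := by
  have hk := C.valuation.map_zpow_of_eq_coe C.w_piOm k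
  rwa [mul_one] at hk

theorem w_pow_of_eq_coe {x : Om p} {r : ℚ} (hx : C.w x = r) (n : ℕ) :
    C.w (x ^ n) = ((n * r : ℚ) : WithTop ℚ) := by
  have hn := C.valuation.map_zpow_of_eq_coe hx n
  rwa [zpow_natCast, Int.cast_natCast] at hn

theorem evOm_eq_eval₂ (g : Polynomial ↥(Oring p C.K)) (θ : Om p) :
    C.evOm g θ = g.eval₂ C.toOm θ :=
  eval_map _ _

theorem w_toOm_nonneg (x : ↥(Oring p C.K)) : 0 ≤ C.w (C.toOm x) := by
  let _ : Algebra ℤ_[p] C.K := ((algebraMap ℚ_[p] C.K).comp PadicInt.Coe.ringHom).toAlgebra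
  obtain ⟨Q, hQm, hQ0⟩ : IsIntegral ℤ_[p] (x : C.K) := x.2
  let ι := algebraMap C.K (Om p)
  refine C.valuation.nonneg_of_eval₂_eq_zero (ι.comp (algebraMap ℤ_[p] C.K)) (fun c => ?_) hQm
    (by rw [show C.toOm x = ι x from rfl, ← hom_eval₂, hQ0, map_zero])
  have hc : ι (algebraMap ℤ_[p] C.K c) = algebraMap ℚ_[p] (Om p) c :=
    (IsScalarTower.algebraMap_apply ℚ_[p] C.K (Om p) c).symm
  rw [RingHom.comp_apply, hc, valuation_apply]
  by_cases hc0 : (c : ℚ_[p]) = 0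
  · rw [hc0, map_zero, C.w_zero]
    exact le_top
  · rw [C.w_padic _ hc0, WithTop.coe_nonneg]
    exact mul_nonneg (Int.cast_nonneg_iff.mpr PadicInt.valuation_coe_nonneg) C.ePad_pos.le

theorem w_nonneg_of_evOm_eq_zero {g : Polynomial ↥(Oring p C.K)} (hg : g.Monic) {θ : Om p}
    (hθ : C.evOm g θ = 0) : 0 ≤ C.w θ :=
  C.valuation.nonneg_of_eval₂_eq_zero C.toOm C.w_toOm_nonneg hg (by rwa [← C.evOm_eq_eval₂])

theorem vpol_le_w_evOm (g : Polynomial ↥(Oring p C.K)) {θ : Om p} (hθ : 0 ≤ C.w θ) :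
    C.vpol g ≤ C.w (C.evOm g θ) := by
  rw [evOm_eq_eval₂, eval₂_eq_sum, Polynomial.sum_def, ← valuation_apply]
  refine C.valuation.map_le_sum fun n hn => ?_
  rw [C.valuation.map_mul, C.valuation.map_pow]
  exact le_add_of_le_of_nonneg (Finset.inf_le hn) (nsmul_nonneg hθ n)

theorem vpol_eq_coe_zOf {g : Polynomial ↥(Oring p C.K)} (hg : g ≠ 0) :
    C.vpol g = ((zOf (C.vpol g) : ℚ) : WithTop ℚ) := by
  obtain ⟨k, hk, hkeq⟩ := Finset.exists_mem_eq_inf g.support (nonempty_support_iff.mpr hg)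
    fun n => C.vO (g.coeff n)
  obtain ⟨n, hn⟩ := C.w_Kint _ fun h0 => mem_support_iff.mp hk (Subtype.ext h0)
  rw [vpol, hkeq, vO, hn, zOf_intCast]

/-- `uᵢ = v(aᵢ)` as an integer (junk value `0` when `aᵢ = 0`). -/
def uInt (φ P : Polynomial ↥(Oring p C.K)) (i : ℕ) : ℤ := zOf (C.vpol (C.phiCoeff φ P i))

section Polygon

variable {φ P : Polynomial ↥(Oring p C.K)} {h e : ℕ}

theorem phiCoeff_eq_zero_of_natDegree_lt (hφ : φ.Monic) (hdeg : 0 < φ.natDegree) {i : ℕ}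
    (hi : P.natDegree < i) : C.phiCoeff φ P i = 0 := by
  rw [phiCoeff, divByMonic_pow_eq_zero hφ hdeg hi, zero_modByMonic]

theorem eq_sum_phiCoeff_mul_pow (hφ : φ.Monic) (hdeg : 0 < φ.natDegree)
    (P : Polynomial ↥(Oring p C.K)) :
    P = ∑ i ∈ Finset.range (P.natDegree + 1), C.phiCoeff φ P i * φ ^ i := by
  conv_lhs => rw [eq_sum_modByMonic_mul_pow_add hφ P (P.natDegree + 1),
    divByMonic_pow_eq_zero hφ hdeg (Nat.lt_succ_self _), zero_mul, add_zero]
  rfl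

theorem ptVal_eq_top_of_phiCoeff_eq_zero (he : 0 < e) {i : ℕ} (hi : C.phiCoeff φ P i = 0) :
    C.ptVal φ P h e i = ⊤ := by
  obtain ⟨k, rfl⟩ := Nat.exists_eq_add_one_of_ne_zero he.ne'
  rw [ptVal, ptValF, hi, vpol, support_zero, Finset.inf_empty, succ_nsmul, add_top, top_add]

theorem ptVal_eq_coe {i : ℕ} (hi : C.phiCoeff φ P i ≠ 0) :
    C.ptVal φ P h e i = (((e * C.uInt φ P i + h * i : ℤ) : ℚ) : WithTop ℚ) := by
  rw [ptVal, ptValF, C.vpol_eq_coe_zOf hi, ← WithTop.coe_nsmul, ← WithTop.coe_natCast,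
    ← WithTop.coe_add, WithTop.coe_eq_coe, nsmul_eq_mul]
  push_cast
  rfl

theorem exists_ptVal_eq_wval : ∃ i, C.ptVal φ P h e i = C.wval φ P h e := by
  obtain ⟨i, -, hi⟩ := Finset.exists_mem_eq_inf (Finset.range (P.natDegree + 1))
    Finset.nonempty_range_add_one fun i => C.ptVal φ P h e i
  exact ⟨i, hi.symm⟩

theorem wval_ne_top (hφ : φ.Monic) (hdeg : 0 < φ.natDegree) (hP : P ≠ 0) :
    C.wval φ P h e ≠ ⊤ := by
  obtain ⟨i, hi, hai⟩ : ∃ i ∈ Finset.range (P.natDegree + 1), C.phiCoeff φ P i ≠ 0 := by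
    by_contra! hall
    refine hP ((C.eq_sum_phiCoeff_mul_pow hφ hdeg P).trans (Finset.sum_eq_zero fun i hi => ?_))
    rw [hall i hi, zero_mul]
  refine ne_top_of_le_ne_top (b := C.ptVal φ P h e i) ?_ (Finset.inf_le hi)
  rw [C.ptVal_eq_coe hai]
  exact WithTop.coe_ne_top

theorem phiCoeff_ne_zero_of_ptVal_eq_wval (hW : C.wval φ P h e ≠ ⊤) (he : 0 < e) {i : ℕ}
    (hi : C.ptVal φ P h e i = C.wval φ P h e) : C.phiCoeff φ P i ≠ 0 :=
  fun h0 => hW (hi ▸ C.ptVal_eq_top_of_phiCoeff_eq_zero he h0)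

theorem le_natDegree_of_ptVal_eq_wval (hφ : φ.Monic) (hdeg : 0 < φ.natDegree)
    (hW : C.wval φ P h e ≠ ⊤) (he : 0 < e) {i : ℕ}
    (hi : C.ptVal φ P h e i = C.wval φ P h e) : i ≤ P.natDegree :=
  not_lt.mp fun hlt => C.phiCoeff_ne_zero_of_ptVal_eq_wval hW he hi
    (C.phiCoeff_eq_zero_of_natDegree_lt hφ hdeg hlt)

theorem ptVal_sInit : C.ptVal φ P h e (C.sInit φ P h e) = C.wval φ P h e :=
  Nat.sInf_mem C.exists_ptVal_eq_wval

theorem sInit_le {i : ℕ} (hi : C.ptVal φ P h e i = C.wval φ P h e) : C.sInit φ P h e ≤ i :=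
  Nat.sInf_le hi

theorem bddAbove_setOf_ptVal_eq_wval (hφ : φ.Monic) (hdeg : 0 < φ.natDegree)
    (hW : C.wval φ P h e ≠ ⊤) (he : 0 < e) :
    BddAbove {i | C.ptVal φ P h e i = C.wval φ P h e} :=
  ⟨P.natDegree, fun _ hi => C.le_natDegree_of_ptVal_eq_wval hφ hdeg hW he hi⟩

theorem ptVal_sFin (hφ : φ.Monic) (hdeg : 0 < φ.natDegree) (hW : C.wval φ P h e ≠ ⊤)
    (he : 0 < e) : C.ptVal φ P h e (C.sFin φ P h e) = C.wval φ P h e :=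
  Nat.sSup_mem C.exists_ptVal_eq_wval (C.bddAbove_setOf_ptVal_eq_wval hφ hdeg hW he)

theorem le_sFin (hφ : φ.Monic) (hdeg : 0 < φ.natDegree) (hW : C.wval φ P h e ≠ ⊤)
    (he : 0 < e) {i : ℕ} (hi : C.ptVal φ P h e i = C.wval φ P h e) : i ≤ C.sFin φ P h e :=
  le_csSup (C.bddAbove_setOf_ptVal_eq_wval hφ hdeg hW he) hi

theorem mul_uInt_add_eq_of_ptVal_eq_wval (hW : C.wval φ P h e ≠ ⊤) (he : 0 < e) {i : ℕ}
    (hi : C.ptVal φ P h e i = C.wval φ P h e) :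
    (e : ℤ) * C.uInt φ P i + h * i =
      e * C.uInt φ P (C.sInit φ P h e) + h * C.sInit φ P h e := by
  have hline := hi.trans C.ptVal_sInit.symm
  rwa [C.ptVal_eq_coe (C.phiCoeff_ne_zero_of_ptVal_eq_wval hW he hi),
    C.ptVal_eq_coe (C.phiCoeff_ne_zero_of_ptVal_eq_wval hW he C.ptVal_sInit), WithTop.coe_eq_coe,
    Int.cast_inj] at hline

theorem exists_eq_sInit_add_mul (hcop : h.Coprime e) (hW : C.wval φ P h e ≠ ⊤) (he : 0 < e)
    {i : ℕ} (hi : C.ptVal φ P h e i = C.wval φ P h e) :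
    ∃ j, i = C.sInit φ P h e + j * e := by
  have hsi := C.sInit_le hi
  obtain ⟨j, hj⟩ :=
    hcop.dvd_sub_of_mul_add_mul_eq hsi (C.mul_uInt_add_eq_of_ptVal_eq_wval hW he hi)
  exact ⟨j, by rw [mul_comm]; omega⟩

theorem uInt_sInit_add_mul (hW : C.wval φ P h e ≠ ⊤) (he : 0 < e) {j : ℕ}
    (hj : C.ptVal φ P h e (C.sInit φ P h e + j * e) = C.wval φ P h e) :
    C.uInt φ P (C.sInit φ P h e + j * e) = C.uInt φ P (C.sInit φ P h e) - h * j := by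
  have hline := C.mul_uInt_add_eq_of_ptVal_eq_wval hW he hj
  push_cast at hline
  refine mul_left_cancel₀ (show (e : ℤ) ≠ 0 by positivity) ?_
  linear_combination hline

end Polygon

section Value

variable {φ P : Polynomial ↥(Oring p C.K)} {h e : ℕ} {θ : Om p}

theorem w_gamOm (he : 0 < e) (hwφ : C.w (C.evOm φ θ) = ((h / e : ℚ) : WithTop ℚ)) :
    C.w (C.gamOm φ h e θ) = 0 := by
  rw [gamOm, ← valuation_apply, C.valuation.map_mul, C.valuation.map_zpow_of_eq_coe hwφ,
    C.valuation.map_zpow_of_eq_coe C.w_piOm, ← WithTop.coe_add, ← WithTop.coe_zero,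
    WithTop.coe_eq_coe]
  push_cast
  field_simp
  ring

theorem w_cOm_nonneg (hθ : 0 ≤ C.w θ) (i : ℕ) : 0 ≤ C.w (C.cOm φ P h e i θ) := by
  rw [cOm]
  split_ifs
  · by_cases ha : C.phiCoeff φ P i = 0
    · rw [ha, evOm, Polynomial.map_zero, eval_zero, zero_mul, C.w_zero]
      exact le_top
    · have hle := C.vpol_le_w_evOm (C.phiCoeff φ P i) hθ
      rw [C.vpol_eq_coe_zOf ha] at hle
      rw [C.w_mul, C.w_piOm_zpow]
      generalize C.w (C.evOm (C.phiCoeff φ P i) θ) = a at hle ⊢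
      induction a using WithTop.recTopCoe with
      | top => exact le_top
      | coe a =>
        rw [← WithTop.coe_add, WithTop.coe_nonneg]
        push_cast
        linarith [WithTop.coe_le_coe.mp hle]
  · rw [C.w_zero]
    exact le_top

theorem w_Rom_nonneg (he : 0 < e) (hθ : 0 ≤ C.w θ)
    (hwφ : C.w (C.evOm φ θ) = ((h / e : ℚ) : WithTop ℚ)) :
    0 ≤ C.w (C.Rom φ P h e θ) := by
  rw [Rom, ← valuation_apply]
  refine C.valuation.map_le_sum fun j _ => ?_
  rw [C.valuation.map_mul, C.valuation.map_pow, valuation_apply, valuation_apply,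
    C.w_gamOm he hwφ, nsmul_zero, add_zero]
  exact C.w_cOm_nonneg hθ _

theorem ptVal_eq_nsmul (he : 0 < e) (hwφ : C.w (C.evOm φ θ) = ((h / e : ℚ) : WithTop ℚ))
    (i : ℕ) :
    C.ptVal φ P h e i = e • (C.vpol (C.phiCoeff φ P i) + C.w (C.evOm φ θ ^ i)) := by
  rw [ptVal, ptValF, nsmul_add, C.w_pow_of_eq_coe hwφ, ← WithTop.coe_nsmul,
    ← WithTop.coe_natCast, nsmul_eq_mul]
  congr 2
  push_cast
  field_simp

theorem nsmul_Hq (hW : C.wval φ P h e ≠ ⊤) (he : 0 < e) :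
    e • ((C.Hq φ P h e : ℚ) : WithTop ℚ) = C.wval φ P h e := by
  obtain ⟨W, hW⟩ := WithTop.ne_top_iff_exists.mp hW
  rw [Hq, ← hW, qOf, WithTop.untopD_coe, ← WithTop.coe_nsmul, nsmul_eq_mul]
  congr 1
  field_simp

theorem Hq_lt_w_of_ptVal_ne_wval (hW : C.wval φ P h e ≠ ⊤) (he : 0 < e) (hθ : 0 ≤ C.w θ)
    (hwφ : C.w (C.evOm φ θ) = ((h / e : ℚ) : WithTop ℚ)) {i : ℕ} (hi : i ≤ P.natDegree)
    (hne : C.ptVal φ P h e i ≠ C.wval φ P h e) :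
    ((C.Hq φ P h e : ℚ) : WithTop ℚ) <
      C.w (C.evOm (C.phiCoeff φ P i) θ * C.evOm φ θ ^ i) := by
  have hlt : C.wval φ P h e < C.ptVal φ P h e i :=
    lt_of_le_of_ne (Finset.inf_le (Finset.mem_range.mpr (Nat.lt_succ_of_le hi))) hne.symm
  refine lt_of_nsmul_lt_nsmul_right e ?_
  rw [C.nsmul_Hq hW he]
  refine hlt.trans_le ?_
  rw [C.ptVal_eq_nsmul he hwφ, C.w_mul]
  exact nsmul_le_nsmul_right (add_le_add_left (C.vpol_le_w_evOm _ hθ) _) e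

theorem w_piOm_zpow_mul_pow_sInit (hW : C.wval φ P h e ≠ ⊤) (he : 0 < e)
    (hwφ : C.w (C.evOm φ θ) = ((h / e : ℚ) : WithTop ℚ)) :
    C.w (C.piOm ^ C.uInt φ P (C.sInit φ P h e) * C.evOm φ θ ^ C.sInit φ P h e) =
      ((C.Hq φ P h e : ℚ) : WithTop ℚ) := by
  rw [C.w_mul, C.w_piOm_zpow, C.w_pow_of_eq_coe hwφ, Hq, ← C.ptVal_sInit,
    C.ptVal_eq_coe (C.phiCoeff_ne_zero_of_ptVal_eq_wval hW he C.ptVal_sInit), qOf,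
    WithTop.untopD_coe, ← WithTop.coe_add, WithTop.coe_eq_coe]
  push_cast
  field_simp

theorem evOm_eq_P0om_add (hφ : φ.Monic) (hdeg : 0 < φ.natDegree) (θ : Om p) :
    C.evOm P θ = C.P0om φ P h e θ +
      ∑ i ∈ Finset.range (P.natDegree + 1), if C.ptVal φ P h e i = C.wval φ P h e then 0
        else C.evOm (C.phiCoeff φ P i) θ * C.evOm φ θ ^ i := by
  rw [P0om, ← Finset.sum_add_distrib]
  conv_lhs => rw [C.eq_sum_phiCoeff_mul_pow hφ hdeg P]
  rw [evOm_eq_eval₂, eval₂_finsetSum]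
  refine Finset.sum_congr rfl fun i _ => ?_
  rw [eval₂_mul, eval₂_pow, ← evOm_eq_eval₂, ← evOm_eq_eval₂]
  split_ifs <;> simp

theorem Hq_lt_w_sum_ite (hW : C.wval φ P h e ≠ ⊤) (he : 0 < e) (hθ : 0 ≤ C.w θ)
    (hwφ : C.w (C.evOm φ θ) = ((h / e : ℚ) : WithTop ℚ)) :
    ((C.Hq φ P h e : ℚ) : WithTop ℚ) < C.w (∑ i ∈ Finset.range (P.natDegree + 1),
      if C.ptVal φ P h e i = C.wval φ P h e then 0
        else C.evOm (C.phiCoeff φ P i) θ * C.evOm φ θ ^ i) := by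
  rw [← valuation_apply]
  refine C.valuation.map_lt_sum WithTop.coe_ne_top fun i hi => ?_
  split_ifs with hne
  · rw [AddValuation.map_zero]
    exact WithTop.coe_lt_top _
  · exact C.Hq_lt_w_of_ptVal_ne_wval hW he hθ hwφ
      (Nat.lt_succ_iff.mp (Finset.mem_range.mp hi)) hne

theorem piOm_zpow_mul_pow_sInit_mul_Rom (hφ : φ.Monic) (hdeg : 0 < φ.natDegree)
    (hW : C.wval φ P h e ≠ ⊤) (he : 0 < e) (hcop : h.Coprime e)
    (hwφ : C.w (C.evOm φ θ) = ((h / e : ℚ) : WithTop ℚ)) :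
    C.piOm ^ C.uInt φ P (C.sInit φ P h e) * C.evOm φ θ ^ C.sInit φ P h e * C.Rom φ P h e θ =
      C.P0om φ P h e θ := by
  have hπ := C.ne_zero_of_w_eq_coe C.w_piOm
  have hX := C.ne_zero_of_w_eq_coe hwφ
  obtain ⟨m, hm⟩ := C.exists_eq_sInit_add_mul hcop hW he (C.ptVal_sFin hφ hdeg hW he)
  have hmdiv : (C.sFin φ P h e - C.sInit φ P h e) / e = m := by
    rw [hm, Nat.add_sub_cancel_left, Nat.mul_div_cancel _ he]
  rw [P0om, Finset.sum_range_ite_eq_sum_range_ite_add_mul _ he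
    (hm ▸ C.le_natDegree_of_ptVal_eq_wval hφ hdeg hW he (C.ptVal_sFin hφ hdeg hW he)) ?_,
    Rom, hmdiv, Finset.mul_sum]
  · refine Finset.sum_congr rfl fun j _ => ?_
    rw [cOm]
    split_ifs with hj
    · rw [show zOf (C.vpol (C.phiCoeff φ P (C.sInit φ P h e + j * e))) =
        C.uInt φ P (C.sInit φ P h e + j * e) from rfl, C.uInt_sInit_add_mul hW he hj, gamOm]
      have hG : (C.evOm φ θ ^ (e : ℤ) * C.piOm ^ (-(h : ℤ))) ^ j =
          C.evOm φ θ ^ (j * e) * (C.piOm ^ ((h : ℤ) * j))⁻¹ := by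
        rw [mul_pow, ← zpow_natCast, ← zpow_natCast (C.piOm ^ _), ← zpow_mul, ← zpow_mul,
          ← zpow_natCast (C.evOm φ θ)]
        simp [mul_comm]
      rw [hG, zpow_neg, zpow_sub₀ hπ, pow_add]
      field_simp
    · simp
  · intro i _ hi
    obtain ⟨j, rfl⟩ := C.exists_eq_sInit_add_mul hcop hW he hi
    refine ⟨j, Nat.le_of_mul_le_mul_right ?_ he, rfl⟩
    have := C.le_sFin hφ hdeg hW he hi
    omega

end Value

end PadicCtx

theorem value_vs_polygon
    (C : PadicCtx p)
    (φ : Polynomial ↥(Oring p C.K)) (hφm : φ.Monic) (hφirr : Irreducible (C.redO φ))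
    (h e : ℕ) (he : 0 < e) (hcop : Nat.Coprime h e)
    -- the factor `f_{φ,λ}` of `f` attached to `(φ, λ)` by the Theorem of the polygon:
    (flam : Polynomial ↥(Oring p C.K)) (hflamm : flam.Monic)
    (hflam : ∀ F : Polynomial ↥(Oring p C.K), F.Monic → Irreducible F → F ∣ flam →
      (∃ k : ℕ, 1 ≤ k ∧ C.redO F = (C.redO φ) ^ k) ∧
      (∀ θ' : Om p, C.evOm F θ' = 0 → C.w (C.evOm φ θ') = ((h / e : ℚ) : WithTop ℚ)))
    -- a fixed root `θ` of `f_{φ,λ}`: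
    (θ : Om p) (hθ : C.evOm flam θ = 0)
    :
    ∀ P : Polynomial ↥(Oring p C.K), P ≠ 0 →
      ((C.Hq φ P h e : ℚ) : WithTop ℚ) ≤ C.w (C.evOm P θ) ∧
      (C.w (C.evOm P θ) = ((C.Hq φ P h e : ℚ) : WithTop ℚ) ↔
        C.w (C.Rom φ P h e θ) = 0) := by
  intro P hP
  have hdeg : 0 < φ.natDegree := Nat.pos_of_ne_zero fun h0 => hφirr.not_isUnit <| by
    rw [hφm.natDegree_eq_zero.mp h0, PadicCtx.redO, Polynomial.map_one]
    exact isUnit_one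
  have hθ0 : 0 ≤ C.w θ := C.w_nonneg_of_evOm_eq_zero hflamm hθ
  have hwφ : C.w (C.evOm φ θ) = ((h / e : ℚ) : WithTop ℚ) := by
    obtain ⟨F, hFm, hFirr, hFdvd, hF0⟩ :=
      Polynomial.exists_monic_irreducible_dvd_of_eval₂_eq_zero C.toOm hflamm
        (by rwa [← C.evOm_eq_eval₂])
    exact (hflam F hFm hFirr hFdvd).2 θ (by rwa [C.evOm_eq_eval₂])
  have hW := C.wval_ne_top (h := h) (e := e) hφm hdeg hP
  rw [C.evOm_eq_P0om_add hφm hdeg θ,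
    ← C.piOm_zpow_mul_pow_sInit_mul_Rom hφm hdeg hW he hcop hwφ]
  refine C.valuation.coe_le_map_add_and_eq_iff (C.w_Rom_nonneg he hθ0 hwφ) ?_
    (C.Hq_lt_w_sum_ite hW he hθ0 hwφ)
  rw [C.valuation_apply, C.w_mul, C.w_piOm_zpow_mul_pow_sInit hW he hwφ]
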